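/- arXiv:2102.12470 — 5 statements merged into one kernel-verified Lean document; each statement's English description precedes it below -/
import Mathlib

section
/- Let $\Delta(x) = -\frac{\eta}{l}\nabla\mathcal{L}^l_{\bar\gamma}(x)$ be a single SVAG step. Then $\mathbb{E}\,\Delta(x)\Delta(x)^\top = \frac{\eta^2}{l}\Sigma(x) + \frac{\eta^2}{l^2}\nabla\mathcal{L}(x)\nabla\mathcal{L}(x)^\top$, where $\Sigma(x)$ is the covariance of $\nabla\mathcal{L}_\gamma(x)$. -/
/-!
Write the step as `Δ = -(η / l) (a g(γ₁) + b g(γ₂))` with `g = ∇L_·(x)`, where the SVAG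
coefficients satisfy `a + b = 1` and `a² + b² = l`. Since `γ₁, γ₂` are independent copies of `γ`,
the cross covariances vanish, so `a g(γ₁) + b g(γ₂)` has covariance `(a² + b²) Σ = l Σ` and mean
`(a + b) ∇L = ∇L`; its second moment is covariance plus mean times mean transposed.
-/

open MeasureTheory ProbabilityTheory

namespace ProbabilityTheory

variable {Ω Ω' Γ : Type*} [MeasurableSpace Ω] [MeasurableSpace Ω'] [MeasurableSpace Γ]

lemma IdentDistrib.covariance_comp_eq {μ : Measure Ω} {ν : Measure Ω'} {f : Ω → Γ} {g : Ω' → Γ}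
    {u v : Γ → ℝ} (h : IdentDistrib f g μ ν) (hu : Measurable u) (hv : Measurable v) :
    cov[u ∘ f, v ∘ f; μ] = cov[u ∘ g, v ∘ g; ν] := by
  rw [← covariance_map hu.aestronglyMeasurable hv.aestronglyMeasurable h.aemeasurable_fst,
    h.map_eq, covariance_map hu.aestronglyMeasurable hv.aestronglyMeasurable h.aemeasurable_snd]

variable {μ : Measure Ω} {γ γ₁ γ₂ : Ω → Γ} {u v : Γ → ℝ}

lemma integral_lincomb_identDistrib (h₁ : IdentDistrib γ₁ γ μ μ) (h₂ : IdentDistrib γ₂ γ μ μ)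
    (hu : Measurable u) (hu_int : Integrable (u ∘ γ) μ) (a b : ℝ) :
    μ[fun ω ↦ a * u (γ₁ ω) + b * u (γ₂ ω)] = (a + b) * μ[u ∘ γ] := by
  have hu₁ : Integrable (fun ω ↦ u (γ₁ ω)) μ := (h₁.comp hu).integrable_iff.2 hu_int
  have hu₂ : Integrable (fun ω ↦ u (γ₂ ω)) μ := (h₂.comp hu).integrable_iff.2 hu_int
  have e₁ : ∫ ω, u (γ₁ ω) ∂μ = μ[u ∘ γ] := (h₁.comp hu).integral_eq
  have e₂ : ∫ ω, u (γ₂ ω) ∂μ = μ[u ∘ γ] := (h₂.comp hu).integral_eq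
  rw [integral_add (hu₁.const_mul a) (hu₂.const_mul b), integral_const_mul, integral_const_mul,
    e₁, e₂, add_mul]

variable [IsProbabilityMeasure μ]

lemma covariance_lincomb_iid (h₁ : IdentDistrib γ₁ γ μ μ) (h₂ : IdentDistrib γ₂ γ μ μ)
    (hindep : IndepFun γ₁ γ₂ μ) (hu : Measurable u) (hv : Measurable v)
    (hu2 : MemLp (u ∘ γ) 2 μ) (hv2 : MemLp (v ∘ γ) 2 μ) (a b : ℝ) :
    cov[fun ω ↦ a * u (γ₁ ω) + b * u (γ₂ ω), fun ω ↦ a * v (γ₁ ω) + b * v (γ₂ ω); μ]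
      = (a ^ 2 + b ^ 2) * cov[u ∘ γ, v ∘ γ; μ] := by
  have hu₁ := (h₁.comp hu).memLp_iff.2 hu2
  have hu₂ := (h₂.comp hu).memLp_iff.2 hu2
  have hv₁ := (h₁.comp hv).memLp_iff.2 hv2
  have hv₂ := (h₂.comp hv).memLp_iff.2 hv2
  have cross₁₂ : cov[u ∘ γ₁, v ∘ γ₂; μ] = 0 := (hindep.comp hu hv).covariance_eq_zero hu₁ hv₂
  have cross₂₁ : cov[u ∘ γ₂, v ∘ γ₁; μ] = 0 :=
    (hindep.symm.comp hu hv).covariance_eq_zero hu₂ hv₁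
  change cov[a • (u ∘ γ₁) + b • (u ∘ γ₂), a • (v ∘ γ₁) + b • (v ∘ γ₂); μ] = _
  rw [covariance_add_left (hu₁.const_smul a) (hu₂.const_smul b)
      ((hv₁.const_smul a).add (hv₂.const_smul b)),
    covariance_add_right (hu₁.const_smul a) (hv₁.const_smul a) (hv₂.const_smul b),
    covariance_add_right (hu₂.const_smul b) (hv₁.const_smul a) (hv₂.const_smul b)]
  simp only [covariance_smul_left, covariance_smul_right, cross₁₂, cross₂₁,
    h₁.covariance_comp_eq hu hv, h₂.covariance_comp_eq hu hv]
  ring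

lemma integral_lincomb_iid_mul (h₁ : IdentDistrib γ₁ γ μ μ) (h₂ : IdentDistrib γ₂ γ μ μ)
    (hindep : IndepFun γ₁ γ₂ μ) (hu : Measurable u) (hv : Measurable v)
    (hu2 : MemLp (u ∘ γ) 2 μ) (hv2 : MemLp (v ∘ γ) 2 μ) (a b : ℝ) :
    μ[fun ω ↦ (a * u (γ₁ ω) + b * u (γ₂ ω)) * (a * v (γ₁ ω) + b * v (γ₂ ω))]
      = (a ^ 2 + b ^ 2) * cov[u ∘ γ, v ∘ γ; μ] + (a + b) ^ 2 * (μ[u ∘ γ] * μ[v ∘ γ]) := by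
  set U := fun ω ↦ a * u (γ₁ ω) + b * u (γ₂ ω)
  set V := fun ω ↦ a * v (γ₁ ω) + b * v (γ₂ ω)
  have hU : MemLp U 2 μ :=
    (((h₁.comp hu).memLp_iff.2 hu2).const_smul a).add (((h₂.comp hu).memLp_iff.2 hu2).const_smul b)
  have hV : MemLp V 2 μ :=
    (((h₁.comp hv).memLp_iff.2 hv2).const_smul a).add (((h₂.comp hv).memLp_iff.2 hv2).const_smul b)
  have hcov : cov[U, V; μ] = μ[fun ω ↦ U ω * V ω] - μ[U] * μ[V] := covariance_eq_sub hU hV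
  rw [covariance_lincomb_iid h₁ h₂ hindep hu hv hu2 hv2,
    integral_lincomb_identDistrib h₁ h₂ hu (hu2.integrable one_le_two),
    integral_lincomb_identDistrib h₁ h₂ hv (hv2.integrable one_le_two)] at hcov
  linarith

end ProbabilityTheory

lemma svag_coeff_sq_add_sq {l : ℝ} (hl : 1 ≤ 2 * l) :
    ((1 + √(2 * l - 1)) / 2) ^ 2 + ((1 - √(2 * l - 1)) / 2) ^ 2 = l := by
  have hs : √(2 * l - 1) ^ 2 = 2 * l - 1 := Real.sq_sqrt (by linarith)
  linear_combination hs / 2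

theorem svag_step_second_moment_general {d : ℕ} {Γ Ω : Type*}
    [MeasurableSpace Ω] [MeasurableSpace Γ]
    (μ : Measure Ω) [IsProbabilityMeasure μ]
    (gradL : Γ → EuclideanSpace ℝ (Fin d) → EuclideanSpace ℝ (Fin d))
    (hmeasL : ∀ x, Measurable fun γ' : Γ => gradL γ' x)
    (γ γ₁ γ₂ : Ω → Γ)
    (hmeas : Measurable γ) (hmeas1 : Measurable γ₁) (hmeas2 : Measurable γ₂)
    (hid1 : Measure.map γ₁ μ = Measure.map γ μ)
    (hid2 : Measure.map γ₂ μ = Measure.map γ μ)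
    (hindep : ProbabilityTheory.IndepFun γ₁ γ₂ μ)
    (hLp : ∀ x, ∀ p : ℕ, MemLp (fun ω => gradL (γ ω) x) p μ)
    (η : ℝ) (l : ℕ) (hl : 1 ≤ l)
    (x : EuclideanSpace ℝ (Fin d))
    -- the SVAG step
    (Δ : Ω → EuclideanSpace ℝ (Fin d))
    (hΔ : Δ = fun ω => (-(η / l)) •
      (((1 + Real.sqrt (2 * l - 1)) / 2) • gradL (γ₁ ω) x
        + ((1 - Real.sqrt (2 * l - 1)) / 2) • gradL (γ₂ ω) x))
    -- the full gradient and the noise covariance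
    (m : EuclideanSpace ℝ (Fin d)) (hm : m = ∫ ω, gradL (γ ω) x ∂μ)
    (S : Matrix (Fin d) (Fin d) ℝ)
    (hS : S = fun i j => ∫ ω, (gradL (γ ω) x i - m i) * (gradL (γ ω) x j - m j) ∂μ) :
    ∀ i j : Fin d,
      ∫ ω, Δ ω i * Δ ω j ∂μ
        = η ^ 2 / l * S i j + η ^ 2 / (l : ℝ) ^ 2 * (m i * m j) := by
  intro i j
  set u : Fin d → Γ → ℝ := fun k γ' ↦ gradL γ' x k
  have hu : ∀ k, Measurable (u k) := fun k ↦
    (EuclideanSpace.proj (𝕜 := ℝ) k).continuous.measurable.comp (hmeasL x)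
  have hu2 : ∀ k, MemLp (u k ∘ γ) 2 μ := fun k ↦ (hLp x 2).eval_piLp k
  have hm_apply : ∀ k, m k = μ[u k ∘ γ] := fun k ↦ by
    rw [hm]; exact eval_integral_piLp (fun k ↦ (hu2 k).integrable one_le_two) k
  have hS_apply : S i j = cov[u i ∘ γ, u j ∘ γ; μ] := by
    simp only [hS, hm_apply]; rfl
  set a := (1 + √(2 * l - 1)) / 2
  set b := (1 - √(2 * l - 1)) / 2
  have hΔ_mul : (fun ω ↦ Δ ω i * Δ ω j) = fun ω ↦ (η / l) ^ 2 *
      ((a * u i (γ₁ ω) + b * u i (γ₂ ω)) * (a * u j (γ₁ ω) + b * u j (γ₂ ω))) := by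
    funext ω; simp only [hΔ, PiLp.smul_apply, PiLp.add_apply, smul_eq_mul, u]; ring
  have h₁ : IdentDistrib γ₁ γ μ μ := ⟨hmeas1.aemeasurable, hmeas.aemeasurable, hid1⟩
  have h₂ : IdentDistrib γ₂ γ μ μ := ⟨hmeas2.aemeasurable, hmeas.aemeasurable, hid2⟩
  rw [hΔ_mul, integral_const_mul,
    integral_lincomb_iid_mul h₁ h₂ hindep (hu i) (hu j) (hu2 i) (hu2 j),
    svag_coeff_sq_add_sq (by norm_cast; omega), ← hS_apply, ← hm_apply, ← hm_apply,
    show a + b = 1 by ring]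
  field_simp

/-- for a single SVAG step `Δ(x) = -(η/l) ∇L^l_{γ̄}(x)`, the
second moment satisfies
`E[Δ(x)Δ(x)ᵀ] = (η²/l) Σ(x) + (η²/l²) ∇L(x)∇L(x)ᵀ`,
where `Σ(x)` is the covariance of `∇L_γ(x)` and `∇L(x) = E ∇L_γ(x)`,
written entrywise. -/
theorem svag_step_second_moment {d : ℕ} {Γ Ω : Type*}
    [MeasurableSpace Ω] [MeasurableSpace Γ]
    (μ : Measure Ω) [IsProbabilityMeasure μ]
    (L : Γ → EuclideanSpace ℝ (Fin d) → ℝ)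
    (gradL : Γ → EuclideanSpace ℝ (Fin d) → EuclideanSpace ℝ (Fin d))
    (hgrad : ∀ γ x, HasGradientAt (L γ) (gradL γ x) x)
    (hmeasL : ∀ x, Measurable fun γ' : Γ => gradL γ' x)
    (γ γ₁ γ₂ : Ω → Γ)
    (hmeas : Measurable γ) (hmeas1 : Measurable γ₁) (hmeas2 : Measurable γ₂)
    (hid1 : Measure.map γ₁ μ = Measure.map γ μ)
    (hid2 : Measure.map γ₂ μ = Measure.map γ μ)
    (hindep : ProbabilityTheory.IndepFun γ₁ γ₂ μ)
    (hLp : ∀ x, ∀ p : ℕ, MemLp (fun ω => gradL (γ ω) x) p μ)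
    (η : ℝ) (hη : 0 < η) (l : ℕ) (hl : 1 ≤ l)
    (x : EuclideanSpace ℝ (Fin d))
    -- the SVAG step
    (Δ : Ω → EuclideanSpace ℝ (Fin d))
    (hΔ : Δ = fun ω => (-(η / l)) •
      (((1 + Real.sqrt (2 * l - 1)) / 2) • gradL (γ₁ ω) x
        + ((1 - Real.sqrt (2 * l - 1)) / 2) • gradL (γ₂ ω) x))
    -- the full gradient and the noise covariance
    (m : EuclideanSpace ℝ (Fin d)) (hm : m = ∫ ω, gradL (γ ω) x ∂μ)
    (S : Matrix (Fin d) (Fin d) ℝ)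
    (hS : S = fun i j => ∫ ω, (gradL (γ ω) x i - m i) * (gradL (γ ω) x j - m j) ∂μ) :
    ∀ i j : Fin d,
      ∫ ω, Δ ω i * Δ ω j ∂μ
        = η ^ 2 / l * S i j + η ^ 2 / (l : ℝ) ^ 2 * (m i * m j) :=
  svag_step_second_moment_general μ gradL hmeasL γ γ₁ γ₂ hmeas hmeas1 hmeas2 hid1 hid2 hindep hLp η
    l hl x Δ hΔ m hm S hS
end

section
/- For the estimator of the previous theorem with $m=1$, $K_1=d\geq 2$, and $\Sigma = \beta\mathbf{1}\mathbf{1}^\top + (1-\beta)I$ for $\beta\in[0,1]$, the expected value of the estimator equals $\frac{1}{2}\cdot\frac{\log(\beta d^2 + (1-\beta)d)}{\log d}$, and as $\beta$ ranges over $[0,1]$ this expression ranges over the entire interval $[\frac{1}{2}, 1]$. In particular, the tail-index test can output any value of $1/\alpha$ in $[1/2,1]$ (i.e., $\alpha\in[1,2]$) on jointly Gaussian data. -/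
/-!
Each `X p` is standard normal and `∑ p, X p` is centred normal with variance
`β d ^ 2 + (1 - β) d`. Scaling gives `E log |N(0, v)| = log v / 2 + E log |N(0, 1)|`, and the
constant `E log |N(0, 1)|` (finite because `|log x| ≤ 2 |x| ^ (-1/2) + |x|`) cancels in the
estimator. The resulting value is continuous and increasing in `β`, equal to `1/2` at `β = 0`
and to `1` at `β = 1`, so the intermediate value theorem gives the range.
-/

open MeasureTheory ProbabilityTheory
open Real Set
open scoped NNReal

lemma abs_log_le_two_mul_rpow_neg_half_add (x : ℝ) :
    |log x| ≤ 2 * |x| ^ (-(1 / 2) : ℝ) + |x| := by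
  rw [← log_abs]
  rcases (abs_nonneg x).eq_or_lt with h0 | hpos
  · rw [← h0]; simp
  have hrpow : 0 ≤ |x| ^ (-(1 / 2) : ℝ) := by positivity
  rcases le_or_gt 1 |x| with h1 | h1
  · rw [abs_of_nonneg (log_nonneg h1)]
    linarith [log_le_sub_one_of_pos hpos]
  · have hinv : log (|x|⁻¹) ≤ (|x|⁻¹) ^ (1 / 2 : ℝ) / (1 / 2) :=
      log_le_rpow_div (by positivity) (by norm_num)
    rw [log_inv, inv_rpow hpos.le, ← rpow_neg hpos.le] at hinv
    rw [abs_of_nonpos (log_nonpos hpos.le h1.le)]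
    linarith [abs_nonneg x]

lemma integrable_abs_rpow_mul_exp_neg_mul_sq {b s : ℝ} (hb : 0 < b) (hs : -1 < s) :
    Integrable fun x : ℝ => |x| ^ s * exp (-b * x ^ 2) := by
  have hIoi : IntegrableOn (fun x : ℝ => |x| ^ s * exp (-b * x ^ 2)) (Ioi 0) :=
    (integrableOn_rpow_mul_exp_neg_mul_sq hb hs).congr_fun
      (fun x (hx : 0 < x) => by rw [abs_of_pos hx]) measurableSet_Ioi
  rw [← integrableOn_univ, ← Iio_union_Ici (a := (0 : ℝ)), integrableOn_union,
    integrableOn_Ici_iff_integrableOn_Ioi]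
  refine ⟨?_, hIoi⟩
  rw [← (Measure.measurePreserving_neg (volume : Measure ℝ)).integrableOn_comp_preimage
      (Homeomorph.neg ℝ).measurableEmbedding]
  simpa only [Function.comp_def, neg_sq, neg_preimage, neg_Iio, neg_zero, abs_neg] using hIoi

lemma integrable_log_abs_gaussianReal : Integrable (fun x => log |x|) (gaussianReal 0 1) := by
  rw [gaussianReal_of_var_ne_zero _ one_ne_zero, integrable_withDensity_iff
    (measurable_gaussianPDF _ _) (.of_forall fun _ => gaussianPDF_lt_top)]
  simp only [toReal_gaussianPDF, gaussianPDFReal, NNReal.coe_one, mul_one, sub_zero]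
  have hbound : Integrable fun x : ℝ =>
      (√(2 * π))⁻¹ * (2 * (|x| ^ (-(1 / 2) : ℝ) * exp (-(1 / 2) * x ^ 2))
        + |x| ^ (1 : ℝ) * exp (-(1 / 2) * x ^ 2)) :=
    (((integrable_abs_rpow_mul_exp_neg_mul_sq (by norm_num) (by norm_num)).const_mul 2).add
      (integrable_abs_rpow_mul_exp_neg_mul_sq (by norm_num) (by norm_num))).const_mul _
  refine hbound.mono' (by fun_prop) (.of_forall fun x => ?_)
  rw [norm_mul, norm_mul, Real.norm_of_nonneg (by positivity : (0 : ℝ) ≤ (√(2 * π))⁻¹),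
    Real.norm_of_nonneg (exp_pos _).le, Real.norm_eq_abs, log_abs, rpow_one,
    show -x ^ 2 / 2 = -(1 / 2) * x ^ 2 by ring]
  calc |log x| * ((√(2 * π))⁻¹ * exp (-(1 / 2) * x ^ 2))
      ≤ (2 * |x| ^ (-(1 / 2) : ℝ) + |x|) * ((√(2 * π))⁻¹ * exp (-(1 / 2) * x ^ 2)) := by
        gcongr; exact abs_log_le_two_mul_rpow_neg_half_add x
    _ = _ := by ring

lemma integral_log_abs_gaussianReal {v : ℝ≥0} (hv : v ≠ 0) :
    ∫ x, log |x| ∂gaussianReal 0 v = log v / 2 + ∫ x, log |x| ∂gaussianReal 0 1 := by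
  have hsqrt : 0 < √(v : ℝ) := sqrt_pos.mpr (NNReal.coe_pos.mpr (pos_iff_ne_zero.mpr hv))
  have hmap : (gaussianReal 0 1).map (√(v : ℝ) * ·) = gaussianReal 0 v := by
    rw [gaussianReal_map_const_mul, mul_zero, mul_one]
    congr
    exact sq_sqrt v.coe_nonneg
  have := nullSingletonClass_gaussianReal (μ := 0) one_ne_zero
  have hlog : ∀ᵐ x ∂gaussianReal 0 1, log |√(v : ℝ) * x| = log v / 2 + log |x| := by
    filter_upwards [Measure.ae_ne _ 0] with x hx
    rw [abs_mul, abs_of_pos hsqrt, log_mul hsqrt.ne' (abs_ne_zero.mpr hx), log_sqrt v.coe_nonneg]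
  rw [← hmap, integral_map (by fun_prop) measurable_abs.log.aestronglyMeasurable,
    integral_congr_ae hlog, integral_add (integrable_const _) integrable_log_abs_gaussianReal]
  simp

lemma integral_log_abs_of_map_eq_gaussianReal {Ω : Type*} [MeasurableSpace Ω] {μ : Measure Ω}
    {Y : Ω → ℝ} {v : ℝ≥0} (hv : v ≠ 0) (hY : μ.map Y = gaussianReal 0 v) :
    ∫ ω, log |Y ω| ∂μ = log v / 2 + ∫ x, log |x| ∂gaussianReal 0 1 := by
  have hYm : AEMeasurable Y μ := .of_map_ne_zero (by simp [hY, IsProbabilityMeasure.ne_zero])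
  rw [← integral_log_abs_gaussianReal hv, ← hY,
    integral_map hYm measurable_abs.log.aestronglyMeasurable]

section Equicorrelated

variable {ι Ω : Type*} [Fintype ι] [DecidableEq ι] [MeasurableSpace Ω]

/-- `X` is centred Gaussian with covariance `Σ = β 𝟙𝟙ᵀ + (1 - β) I`, expressed through the laws
of its one-dimensional projections. -/
def IsEquicorrelatedGaussian (X : ι → Ω → ℝ) (β : ℝ) (μ : Measure Ω) : Prop :=
  ∀ a : ι → ℝ, μ.map (fun ω => ∑ p, a p * X p ω)
    = gaussianReal 0 (∑ p, ∑ q, a p * (β + if p = q then 1 - β else 0) * a q).toNNReal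

variable {X : ι → Ω → ℝ} {β : ℝ} {μ : Measure Ω}

lemma IsEquicorrelatedGaussian.map_eq (hX : IsEquicorrelatedGaussian X β μ) (i : ι) :
    μ.map (X i) = gaussianReal 0 1 := by
  simpa [Pi.single_apply, ite_mul, mul_ite] using hX (Pi.single i 1)

lemma IsEquicorrelatedGaussian.map_sum_eq (hX : IsEquicorrelatedGaussian X β μ) :
    μ.map (fun ω => ∑ p, X p ω)
      = gaussianReal 0 (β * Fintype.card ι ^ 2 + (1 - β) * Fintype.card ι).toNNReal := by
  convert hX 1 using 3
  · simp
  · simp only [Pi.one_apply, one_mul, mul_one, Finset.sum_add_distrib, Finset.sum_const,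
      Finset.card_univ, nsmul_eq_mul, Finset.sum_ite_eq, Finset.mem_univ, ↓reduceIte]
    ring

end Equicorrelated

lemma equicorrelated_variance_pos {b d : ℝ} (hb : b ∈ Icc 0 1) (hd : 1 ≤ d) :
    0 < b * d ^ 2 + (1 - b) * d := by
  nlinarith [mul_nonneg hb.1 (show 0 ≤ d ^ 2 - d by nlinarith)]

lemma image_Icc_half_log_div_log {d : ℝ} (hd : 1 < d) :
    (fun b : ℝ => 1 / 2 * (log (b * d ^ 2 + (1 - b) * d) / log d)) '' Icc 0 1
      = Icc (1 / 2) 1 := by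
  have hlogd : 0 < log d := log_pos hd
  have hpos := fun b (hb : b ∈ Icc (0 : ℝ) 1) => equicorrelated_variance_pos hb hd.le
  have hcont : ContinuousOn (fun b : ℝ => 1 / 2 * (log (b * d ^ 2 + (1 - b) * d) / log d))
      (Icc 0 1) :=
    continuousOn_const.mul (.div_const (.log (by fun_prop) fun b hb => (hpos b hb).ne') _)
  have hmono : MonotoneOn (fun b : ℝ => 1 / 2 * (log (b * d ^ 2 + (1 - b) * d) / log d))
      (Icc 0 1) := by
    intro b₁ hb₁ b₂ _ hb
    dsimp only
    gcongr 1 / 2 * (log ?_ / _)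
    · exact hpos b₁ hb₁
    · nlinarith [mul_nonneg (sub_nonneg.mpr hb) (show 0 ≤ d ^ 2 - d by nlinarith)]
  rw [hcont.image_Icc_of_monotoneOn zero_le_one hmono]
  congr 1
  · simp [div_self hlogd.ne']
  · rw [one_mul, sub_self, zero_mul, add_zero, log_pow]
    field_simp
    norm_num

theorem tail_index_gaussian_value_and_range_general {Ω : Type*} [MeasurableSpace Ω]
    (μ : Measure Ω)
    (d : ℕ) (hd : 2 ≤ d) (β : ℝ) (hβ : β ∈ Set.Icc (0 : ℝ) 1)
    (X : Fin d → Ω → ℝ)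
    (hGauss : ∀ a : Fin d → ℝ,
      Measure.map (fun ω => ∑ p, a p * X p ω) μ
        = gaussianReal 0 (Real.toNNReal (∑ p, ∑ q,
            a p * (β + if p = q then 1 - β else 0) * a q))) :
    (1 / Real.log d) *
        ((∫ ω, Real.log |∑ p, X p ω| ∂μ)
          - (1 / (d : ℝ)) * ∑ p, ∫ ω, Real.log |X p ω| ∂μ)
      = (1 / 2) * (Real.log (β * (d : ℝ) ^ 2 + (1 - β) * d) / Real.log d) ∧
    (fun b : ℝ => (1 / 2) * (Real.log (b * (d : ℝ) ^ 2 + (1 - b) * d) / Real.log d)) ''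
        Set.Icc (0 : ℝ) 1
      = Set.Icc (1 / 2 : ℝ) 1 := by
  have hX : IsEquicorrelatedGaussian X β μ := hGauss
  have hd₁ : (1 : ℝ) < d := by exact_mod_cast hd
  have hvar := equicorrelated_variance_pos hβ hd₁.le
  have hsum := integral_log_abs_of_map_eq_gaussianReal (toNNReal_pos.mpr hvar).ne'
    (by simpa using hX.map_sum_eq)
  have hcoord i := integral_log_abs_of_map_eq_gaussianReal one_ne_zero (hX.map_eq i)
  refine ⟨?_, image_Icc_half_log_div_log hd₁⟩
  rw [hsum, coe_toNNReal _ hvar.le]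
  simp only [hcoord, NNReal.coe_one, log_one, zero_div, zero_add, Finset.sum_const,
    Finset.card_univ, Fintype.card_fin, nsmul_eq_mul]
  field_simp
  ring

/-- for the tail-index estimator with `m = 1`, `K₁ = d ≥ 2` and
`Σ = β 11ᵀ + (1-β) I`, `β ∈ [0,1]`, the expected estimator equals
`(1/2) log(βd² + (1-β)d) / log d`, and as `β` ranges over `[0,1]` this
expression ranges over the whole interval `[1/2, 1]`: the tail-index test can
output any `1/α ∈ [1/2, 1]` (i.e. `α ∈ [1,2]`) on jointly Gaussian data. -/
theorem tail_index_gaussian_value_and_range {Ω : Type*} [MeasurableSpace Ω]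
    (μ : Measure Ω) [IsProbabilityMeasure μ]
    (d : ℕ) (hd : 2 ≤ d) (β : ℝ) (hβ : β ∈ Set.Icc (0 : ℝ) 1)
    (X : Fin d → Ω → ℝ)
    (hmeas : ∀ p, Measurable (X p))
    (hGauss : ∀ a : Fin d → ℝ,
      Measure.map (fun ω => ∑ p, a p * X p ω) μ
        = gaussianReal 0 (Real.toNNReal (∑ p, ∑ q,
            a p * (β + if p = q then 1 - β else 0) * a q))) :
    (1 / Real.log d) *
        ((∫ ω, Real.log |∑ p, X p ω| ∂μ)
          - (1 / (d : ℝ)) * ∑ p, ∫ ω, Real.log |X p ω| ∂μ)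
      = (1 / 2) * (Real.log (β * (d : ℝ) ^ 2 + (1 - β) * d) / Real.log d) ∧
    (fun b : ℝ => (1 / 2) * (Real.log (b * (d : ℝ) ^ 2 + (1 - b) * d) / Real.log d)) ''
        Set.Icc (0 : ℝ) 1
      = Set.Icc (1 / 2 : ℝ) 1 :=
  tail_index_gaussian_value_and_range_general μ d hd β hβ X hGauss
end

section
/- Let $B,\eta>0$ and $\kappa>1$, $1<C<\sqrt{\kappa}$. Suppose the equilibrium quantities of SGD with (batch size, LR) $=(B,\eta)$ and $(\kappa B,\kappa\eta)$ satisfy the stationarity relations $\eta(G_\infty^{B,\eta}+N_\infty^{B,\eta}) = 2\lambda R_\infty^{B,\eta}$ and $\kappa\eta(G_\infty^{\kappa B,\kappa\eta}+N_\infty^{\kappa B,\kappa\eta}) = 2\lambda R_\infty^{\kappa B,\kappa\eta}$. If $\frac{N_\infty^{\kappa B,\kappa\eta}}{G_\infty^{\kappa B,\kappa\eta}} < (1-\frac{1}{\kappa})\frac{1}{C^2-1} - \frac{1}{\kappa}$, then $(C,\kappa)$-linear-scaling-invariance fails, i.e., it is impossible that simultaneously $\frac{1}{C}\leq \frac{R_\infty^{B,\eta}}{R_\infty^{\kappa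 B,\kappa\eta}} \leq C$, $\frac{1}{C}\leq \frac{N_\infty^{B,\eta}}{\kappa N_\infty^{\kappa B,\kappa\eta}} \leq C$, and $\frac{1}{C}\leq \frac{G_\infty^{B,\eta}}{G_\infty^{\kappa B,\kappa\eta}} \leq C$. -/
/-- failure of `(C,κ)`-linear-scaling-invariance when the
noise-to-signal ratio of the large-batch run is too small.
`R1, G1, N1` are the equilibrium quantities for batch size `B`, LR `η`;
`R2, G2, N2` those for batch size `κB`, LR `κη`. -/
theorem lsr_failure_condition (η lam κ C R1 G1 N1 R2 G2 N2 : ℝ)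
    (hη : 0 < η) (hlam : 0 < lam) (hκ : 1 < κ)
    (hC1 : 1 < C) (hC2 : C < Real.sqrt κ)
    (hR1 : 0 < R1) (hG1 : 0 < G1) (hN1 : 0 < N1)
    (hR2 : 0 < R2) (hG2 : 0 < G2) (hN2 : 0 < N2)
    (hstat1 : η * (G1 + N1) = 2 * lam * R1)
    (hstat2 : κ * η * (G2 + N2) = 2 * lam * R2)
    (hcond : N2 / G2 < (1 - 1 / κ) * (1 / (C ^ 2 - 1)) - 1 / κ) :
    ¬ (1 / C ≤ R1 / R2 ∧ R1 / R2 ≤ C ∧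
       1 / C ≤ N1 / (κ * N2) ∧ N1 / (κ * N2) ≤ C ∧
       1 / C ≤ G1 / G2 ∧ G1 / G2 ≤ C) := by
  rintro ⟨h1, -, -, h4, -, h6⟩
  have hC0 : 0 < C := lt_trans one_pos hC1
  have hκ0 : (0:ℝ) < κ := lt_trans one_pos hκ
  have hCκ : C ^ 2 < κ := by
    have hs : Real.sqrt κ ^ 2 = κ := Real.sq_sqrt hκ0.le
    nlinarith [Real.sqrt_nonneg κ]
  have hC2_1 : (0:ℝ) < C ^ 2 - 1 := by nlinarith
  have hA : R2 ≤ C * R1 := by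
    rw [div_le_div_iff₀ hC0 hR2] at h1; nlinarith
  have hB : G1 ≤ C * G2 := by
    rw [div_le_iff₀ hG2] at h6; linarith [mul_comm G2 C]
  have hN : N1 ≤ C * (κ * N2) := by
    have : (0:ℝ) < κ * N2 := by positivity
    rw [div_le_iff₀ this] at h4; linarith [mul_comm (κ * N2) C]
  have key : κ * η * (G2 + N2) ≤ C * (η * (G1 + N1)) := by
    rw [hstat1, hstat2]; nlinarith
  have key' : κ * (G2 + N2) ≤ C * (G1 + N1) :=
    le_of_mul_le_mul_left (by nlinarith) hη
  have key2 : G2 * (κ - C ^ 2) ≤ κ * N2 * (C ^ 2 - 1) := by nlinarith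
  have hgap : (κ - C ^ 2) / (κ * (C ^ 2 - 1)) ≤ N2 / G2 := by
    rw [div_le_div_iff₀ (by positivity) hG2]; linarith [key2]
  have heq : (1 - 1 / κ) * (1 / (C ^ 2 - 1)) - 1 / κ
      = (κ - C ^ 2) / (κ * (C ^ 2 - 1)) := by
    field_simp; ring
  rw [heq] at hcond
  linarith
end

section
/- Under the same equilibrium stationarity hypotheses as in the LSR failure theorem, if $\kappa > C^2\big(1 + \frac{N_\infty^{B,\eta}}{G_\infty^{B,\eta}}\big)$ with $1<C<\sqrt{\kappa}$, then SGD with batch size $B$ and learning rate $\eta$ does not exhibit $(C,\kappa)$-linear-scaling-invariance. -/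
/-- failure of `(C,κ)`-linear-scaling-invariance when
`κ > C²(1 + N1/G1)`, under the same equilibrium stationarity hypotheses. -/
theorem lsr_failure_kappa_bound (η lam κ C R1 G1 N1 R2 G2 N2 : ℝ)
    (hη : 0 < η) (hlam : 0 < lam)
    (hC1 : 1 < C) (hC2 : C < Real.sqrt κ)
    (hR1 : 0 < R1) (hG1 : 0 < G1) (hN1 : 0 < N1)
    (hR2 : 0 < R2) (hG2 : 0 < G2) (hN2 : 0 < N2)
    (hstat1 : η * (G1 + N1) = 2 * lam * R1)
    (hstat2 : κ * η * (G2 + N2) = 2 * lam * R2)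
    (hκ : κ > C ^ 2 * (1 + N1 / G1)) :
    ¬ (1 / C ≤ R1 / R2 ∧ R1 / R2 ≤ C ∧
       1 / C ≤ N1 / (κ * N2) ∧ N1 / (κ * N2) ≤ C ∧
       1 / C ≤ G1 / G2 ∧ G1 / G2 ≤ C) := by
  rintro ⟨h1, h2, h3, h4, h5, h6⟩
  have hC0 : (0 : ℝ) < C := by linarith
  have hκ0 : 0 < κ := lt_trans (by positivity) hκ
  -- from 1/C ≤ R1/R2 : R2 ≤ C * R1
  have e1 : R2 ≤ C * R1 := by
    have := (div_le_div_iff₀ hC0 hR2).mp h1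
    linarith
  -- G1 ≤ C * G2
  have e2 : G1 ≤ C * G2 := by
    have := (div_le_iff₀ hG2).mp h6
    linarith [this]
  -- κ(G2+N2) ≤ C(G1+N1)
  have e3 : κ * (G2 + N2) ≤ C * (G1 + N1) := by
    have h : κ * η * (G2 + N2) ≤ C * (η * (G1 + N1)) := by
      rw [hstat1, hstat2]; nlinarith
    nlinarith
  -- hκ cleared of division
  have e4 : κ * G1 > C ^ 2 * (G1 + N1) := by
    have h : C ^ 2 * (1 + N1 / G1) * G1 = C ^ 2 * (G1 + N1) := by
      field_simp
    nlinarith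
  nlinarith [mul_le_mul_of_nonneg_left e2 (le_of_lt hκ0),
    mul_le_mul_of_nonneg_left e3 (le_of_lt hC0),
    mul_pos (mul_pos hC0 hκ0) hN2]
end

section
/- Let $\mathcal{L}_\gamma$ be scale-invariant losses and $\Sigma(x)=\mathbb{E}[(\nabla\mathcal{L}_\gamma(x)-\nabla\mathcal{L}(x))(\nabla\mathcal{L}_\gamma(x)-\nabla\mathcal{L}(x))^\top]$ the gradient noise covariance. Then $\Sigma(x)\,x = 0$ for every $x\neq 0$. -/
open MeasureTheory

open InnerProductSpace in
private lemma grad_orth_aux {d : ℕ} {f : EuclideanSpace ℝ (Fin d) → ℝ}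
    {g x : EuclideanSpace ℝ (Fin d)}
    (hsi : ∀ c : ℝ, 0 < c → f (c • x) = f x)
    (hg : HasGradientAt f g x) : ∑ j, g j * x j = 0 := by
  have hF := hg.hasFDerivAt
  have hF' : HasFDerivAt f (toDual ℝ _ g) ((1:ℝ) • x) := by rw [one_smul]; exact hF
  have hc : HasDerivAt (fun c : ℝ => c • x) x 1 := by
    simpa using (hasDerivAt_id (1:ℝ)).smul_const x
  have h1 : HasDerivAt (fun c : ℝ => f (c • x)) ((toDual ℝ _ g) x) 1 :=
    hF'.comp_hasDerivAt 1 hc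
  have heq : (fun c : ℝ => f (c • x)) =ᶠ[nhds (1:ℝ)] fun _ => f x := by
    filter_upwards [eventually_gt_nhds one_pos] with c hc using hsi c hc
  have h0 : HasDerivAt (fun c : ℝ => f (c • x)) 0 1 :=
    (hasDerivAt_const (1:ℝ) (f x)).congr_of_eventuallyEq heq
  have := h1.unique h0
  have hinner : (toDual ℝ _ g) x = ∑ j, g j * x j := by
    simp [toDual_apply_apply, PiLp.inner_apply, mul_comm]
  rw [hinner] at this
  exact this

/-- for scale-invariant losses `L_γ`, the gradient noise
covariance satisfies `Σ(x) x = 0` for every `x ≠ 0`.  Here `γv : Ω → Γ` is the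
random index, `gradL γ x` is the gradient of `L γ` at `x`, and `Σ(x)` is
written out entrywise via Bochner integrals. -/
theorem noise_covariance_kills_parameter {d : ℕ} {Γ Ω : Type*}
    [MeasurableSpace Ω] (μ : Measure Ω) [IsProbabilityMeasure μ]
    (L : Γ → EuclideanSpace ℝ (Fin d) → ℝ)
    (gradL : Γ → EuclideanSpace ℝ (Fin d) → EuclideanSpace ℝ (Fin d))
    (hsi : ∀ γ : Γ, ∀ c : ℝ, 0 < c → ∀ x : EuclideanSpace ℝ (Fin d), x ≠ 0 →
      L γ (c • x) = L γ x)
    (hgrad : ∀ γ : Γ, ∀ x : EuclideanSpace ℝ (Fin d), x ≠ 0 →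
      HasGradientAt (L γ) (gradL γ x) x)
    (γv : Ω → Γ)
    (hint : ∀ x : EuclideanSpace ℝ (Fin d), Integrable (fun ω => gradL (γv ω) x) μ)
    (hint2 : ∀ x : EuclideanSpace ℝ (Fin d), ∀ i j : Fin d,
      Integrable (fun ω => gradL (γv ω) x i * gradL (γv ω) x j) μ) :
    ∀ x : EuclideanSpace ℝ (Fin d), x ≠ 0 → ∀ i : Fin d,
      ∑ j : Fin d,
        (∫ ω, (gradL (γv ω) x i - (∫ ω', gradL (γv ω') x ∂μ) i)
            * (gradL (γv ω) x j - (∫ ω', gradL (γv ω') x ∂μ) j) ∂μ) * x j = 0 := by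
  intro x hx i
  set G : Ω → EuclideanSpace ℝ (Fin d) := fun ω => gradL (γv ω) x with hG
  set m : EuclideanSpace ℝ (Fin d) := ∫ ω', G ω' ∂μ with hm
  -- componentwise integrability
  have hGk : ∀ k : Fin d, Integrable (fun ω => G ω k) μ := fun k => by
    simpa using ((EuclideanSpace.proj k : EuclideanSpace ℝ (Fin d) →L[ℝ] ℝ)).integrable_comp (hint x)
  -- m k = ∫ G ω k
  have hmk : ∀ k : Fin d, m k = ∫ ω, G ω k ∂μ := fun k => by
    exact (((EuclideanSpace.proj k : EuclideanSpace ℝ (Fin d) →L[ℝ] ℝ)).integral_comp_comm (hint x)).symm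
  -- orthogonality pointwise
  have horth : ∀ ω, ∑ j, G ω j * x j = 0 := fun ω =>
    grad_orth_aux (fun c hc => hsi (γv ω) c hc x hx) (hgrad (γv ω) x hx)
  -- mean orthogonality
  have hmorth : ∑ j, m j * x j = 0 := by
    have : ∑ j, m j * x j = ∫ ω, ∑ j, G ω j * x j ∂μ := by
      rw [integral_finset_sum _ (fun j _ => (hGk j).mul_const (x j))]
      exact Finset.sum_congr rfl fun j _ => by rw [hmk j, integral_mul_const]
    simp [this, horth]
  -- integrability of covariance terms
  have hcov : ∀ j : Fin d, Integrable (fun ω => (G ω i - m i) * (G ω j - m j)) μ := by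
    intro j
    have hrw : (fun ω => (G ω i - m i) * (G ω j - m j))
        = fun ω => (G ω i * G ω j - m i * G ω j) - (G ω i * m j - m i * m j) := by
      funext ω; ring
    rw [hrw]
    exact ((hint2 x i j).sub ((hGk j).const_mul (m i))).sub
      (((hGk i).mul_const (m j)).sub (integrable_const _))
  calc ∑ j : Fin d, (∫ ω, (G ω i - m i) * (G ω j - m j) ∂μ) * x j
      = ∑ j : Fin d, ∫ ω, (G ω i - m i) * (G ω j - m j) * x j ∂μ :=
        Finset.sum_congr rfl fun j _ => (integral_mul_const _ _).symm
    _ = ∫ ω, ∑ j : Fin d, (G ω i - m i) * (G ω j - m j) * x j ∂μ :=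
        (integral_finset_sum _ (fun j _ => (hcov j).mul_const (x j))).symm
    _ = 0 := by
        have : ∀ ω, ∑ j : Fin d, (G ω i - m i) * (G ω j - m j) * x j = 0 := by
          intro ω
          have : ∑ j : Fin d, (G ω i - m i) * (G ω j - m j) * x j
              = (G ω i - m i) * (∑ j, G ω j * x j - ∑ j, m j * x j) := by
            rw [mul_sub, Finset.mul_sum, Finset.mul_sum, ← Finset.sum_sub_distrib]
            exact Finset.sum_congr rfl fun j _ => by ring
          rw [this, horth, hmorth]; ring
        simp [this]
end
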